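/- arXiv:2112.04197 — 2 statements merged into one kernel-verified Lean document; each statement's English description precedes it below -/
import Mathlib

section
/- Let 𝓜 be a nonempty finite family of subsets of [n], μ, μ̂ : [n] → ℝ, and θ ≥ 0 such that |μ̂(M) − μ(M)| ≤ θ/2 for all M ∈ 𝓜. Let M̂ maximize μ̂ over 𝓜 and μ* = max_{M∈𝓜} μ(M). Suppose arm a is in every optimal set, some set in 𝓜 avoids a, and Δ(a) = μ* − max_{M∈𝓜, a∉M} μ(M) > 2θ. Let M̃ maximize μ̂ over {M ∈ 𝓜 : a ∉ M}. Then the empirical gap satisfies μ̂(M̂) − μ̂(M̃) > θ. -/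
/-!
Let `M⋆` be a true maximizer, so `μ(M⋆) = μ*`. Since `M̂` maximizes `μ̂` and the estimates are
`θ/2`-accurate, `μ̂(M̂) ≥ μ̂(M⋆) ≥ μ* - θ/2`; likewise `μ̂(M̃) ≤ μ(M̃) + θ/2 ≤ μ* - Δ(a) + θ/2`.
Hence the empirical gap is at least `Δ(a) - θ > θ`.
-/

namespace Finset

variable {ι α : Type*} [AddCommGroup α] [LinearOrder α] [IsOrderedAddMonoid α]

theorem sup'_sub_le_of_abs_sub_le {s : Finset ι} (hs : s.Nonempty) {f g : ι → α} {ε : α}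
    (hclose : ∀ i ∈ s, |g i - f i| ≤ ε) {x : ι} (hmax : ∀ i ∈ s, g i ≤ g x) :
    s.sup' hs f - ε ≤ g x := by
  obtain ⟨y, hy, hfy⟩ := s.exists_mem_eq_sup' hs f
  calc s.sup' hs f - ε = f y - ε := by rw [hfy]
    _ ≤ g y := sub_le_comm.mp (abs_sub_le_iff.mp (hclose y hy)).2
    _ ≤ g x := hmax y hy

theorem le_sup'_add_of_abs_sub_le {s : Finset ι} (hs : s.Nonempty) {f g : ι → α} {ε : α}
    {x : ι} (hx : x ∈ s) (hclose : |g x - f x| ≤ ε) :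
    g x ≤ s.sup' hs f + ε :=
  calc g x ≤ f x + ε := sub_le_iff_le_add'.mp (abs_sub_le_iff.mp hclose).1
    _ ≤ s.sup' hs f + ε := add_le_add_left (s.le_sup' f hx) ε

end Finset

theorem stmt_5_general (n : ℕ) (μ μhat : Fin n → ℝ) (𝓜 : Finset (Finset (Fin n))) (hne : 𝓜.Nonempty)
    (θ : ℝ)
    (hclose : ∀ M ∈ 𝓜, |(∑ i ∈ M, μhat i) - ∑ i ∈ M, μ i| ≤ θ / 2)
    (Mhat : Finset (Fin n))
    (hemp : ∀ M ∈ 𝓜, (∑ i ∈ M, μhat i) ≤ ∑ i ∈ Mhat, μhat i)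
    (a : Fin n)
    (hfil : (𝓜.filter fun M => a ∉ M).Nonempty)
    (hgap : 2 * θ < 𝓜.sup' hne (fun M => ∑ i ∈ M, μ i)
        - (𝓜.filter fun M => a ∉ M).sup' hfil (fun M => ∑ i ∈ M, μ i))
    (Mtil : Finset (Fin n)) (hMtil : Mtil ∈ 𝓜.filter fun M => a ∉ M) :
    θ < (∑ i ∈ Mhat, μhat i) - ∑ i ∈ Mtil, μhat i := by
  have hMhat_large := Finset.sup'_sub_le_of_abs_sub_le hne hclose hemp
  have hMtil_small := Finset.le_sup'_add_of_abs_sub_le (f := fun M => ∑ i ∈ M, μ i)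
    (g := fun M => ∑ i ∈ M, μhat i) hfil hMtil (hclose Mtil (Finset.mem_filter.mp hMtil).1)
  linarith

theorem stmt_5 (n : ℕ) (μ μhat : Fin n → ℝ) (𝓜 : Finset (Finset (Fin n))) (hne : 𝓜.Nonempty)
    (θ : ℝ) (hθ : 0 ≤ θ)
    (hclose : ∀ M ∈ 𝓜, |(∑ i ∈ M, μhat i) - ∑ i ∈ M, μ i| ≤ θ / 2)
    (Mhat : Finset (Fin n)) (hMhat : Mhat ∈ 𝓜)
    (hemp : ∀ M ∈ 𝓜, (∑ i ∈ M, μhat i) ≤ ∑ i ∈ Mhat, μhat i)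
    (a : Fin n)
    (hopt : ∀ M ∈ 𝓜, (∑ i ∈ M, μ i) = 𝓜.sup' hne (fun M => ∑ i ∈ M, μ i) → a ∈ M)
    (hfil : (𝓜.filter fun M => a ∉ M).Nonempty)
    (hgap : 2 * θ < 𝓜.sup' hne (fun M => ∑ i ∈ M, μ i)
        - (𝓜.filter fun M => a ∉ M).sup' hfil (fun M => ∑ i ∈ M, μ i))
    (Mtil : Finset (Fin n)) (hMtil : Mtil ∈ 𝓜.filter fun M => a ∉ M)
    (hempTil : ∀ M ∈ 𝓜.filter fun M => a ∉ M, (∑ i ∈ M, μhat i) ≤ ∑ i ∈ Mtil, μhat i) :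
    θ < (∑ i ∈ Mhat, μhat i) - ∑ i ∈ Mtil, μhat i :=
  stmt_5_general n μ μhat 𝓜 hne θ hclose Mhat hemp a hfil hgap Mtil hMtil
end

section
/- Let 𝓜 be a nonempty finite family of subsets of [n], μ, μ̂ : [n] → ℝ, θ ≥ 0, with |μ̂(M) − μ(M)| ≤ θ/2 for all M ∈ 𝓜. Let μ* = max_{M∈𝓜} μ(M) and let M* be some optimal set. Suppose arm a satisfies a ∉ M* for some optimal M*. Let M̂ maximize μ̂ over 𝓜 and M̃ maximize μ̂ over {M ∈ 𝓜 : a ∉ M}. Then μ̂(M̂) − μ̂(M̃) ≤ θ. (Consequently, an arm outside some optimal set can never be accepted with threshold θ.) -/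
/-! Estimates within θ/2 of the truth can favour any set over a true optimum `M*` by at most θ.
Since `a ∉ M*`, the constrained empirical maximizer `M̃` does at least as well as `M*`, so
`μ̂(M̂) ≤ μ̂(M*) + θ ≤ μ̂(M̃) + θ`. -/

theorem le_add_of_isMaxOn_of_abs_sub_le_half {ι : Type*} {s : Set ι} {f g : ι → ℝ} {θ : ℝ}
    (hclose : ∀ x ∈ s, |f x - g x| ≤ θ / 2) {x y : ι} (hx : x ∈ s) (hy : y ∈ s)
    (hy_max : IsMaxOn g s y) : f x ≤ f y + θ := by
  have hgx := abs_le.1 (hclose x hx)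
  have hgy := abs_le.1 (hclose y hy)
  have hg : g x ≤ g y := isMaxOn_iff.1 hy_max x hx
  linarith

theorem stmt_6_general (n : ℕ) (μ μhat : Fin n → ℝ) (𝓜 : Finset (Finset (Fin n))) (hne : 𝓜.Nonempty)
    (θ : ℝ)
    (hclose : ∀ M ∈ 𝓜, |(∑ i ∈ M, μhat i) - ∑ i ∈ M, μ i| ≤ θ / 2)
    (Mstar : Finset (Fin n)) (hMstar : Mstar ∈ 𝓜)
    (hopt : (∑ i ∈ Mstar, μ i) = 𝓜.sup' hne (fun M => ∑ i ∈ M, μ i))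
    (a : Fin n) (ha : a ∉ Mstar)
    (Mhat : Finset (Fin n)) (hMhat : Mhat ∈ 𝓜)
    (Mtil : Finset (Fin n))
    (hempTil : ∀ M ∈ 𝓜.filter fun M => a ∉ M, (∑ i ∈ M, μhat i) ≤ ∑ i ∈ Mtil, μhat i) :
    (∑ i ∈ Mhat, μhat i) - (∑ i ∈ Mtil, μhat i) ≤ θ := by
  have hMstar_max : IsMaxOn (fun M => ∑ i ∈ M, μ i) (𝓜 : Set (Finset (Fin n))) Mstar :=
    isMaxOn_iff.2 fun M hM => hopt ▸ Finset.le_sup' (fun M => ∑ i ∈ M, μ i) hM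
  have hMhat_le : ∑ i ∈ Mhat, μhat i ≤ (∑ i ∈ Mstar, μhat i) + θ :=
    le_add_of_isMaxOn_of_abs_sub_le_half hclose hMhat hMstar hMstar_max
  have hMstar_le : ∑ i ∈ Mstar, μhat i ≤ ∑ i ∈ Mtil, μhat i :=
    hempTil Mstar (Finset.mem_filter.2 ⟨hMstar, ha⟩)
  linarith

theorem stmt_6 (n : ℕ) (μ μhat : Fin n → ℝ) (𝓜 : Finset (Finset (Fin n))) (hne : 𝓜.Nonempty)
    (θ : ℝ) (hθ : 0 ≤ θ)
    (hclose : ∀ M ∈ 𝓜, |(∑ i ∈ M, μhat i) - ∑ i ∈ M, μ i| ≤ θ / 2)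
    (Mstar : Finset (Fin n)) (hMstar : Mstar ∈ 𝓜)
    (hopt : (∑ i ∈ Mstar, μ i) = 𝓜.sup' hne (fun M => ∑ i ∈ M, μ i))
    (a : Fin n) (ha : a ∉ Mstar)
    (Mhat : Finset (Fin n)) (hMhat : Mhat ∈ 𝓜)
    (hemp : ∀ M ∈ 𝓜, (∑ i ∈ M, μhat i) ≤ ∑ i ∈ Mhat, μhat i)
    (Mtil : Finset (Fin n)) (hMtil : Mtil ∈ 𝓜.filter fun M => a ∉ M)
    (hempTil : ∀ M ∈ 𝓜.filter fun M => a ∉ M, (∑ i ∈ M, μhat i) ≤ ∑ i ∈ Mtil, μhat i) :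
    (∑ i ∈ Mhat, μhat i) - (∑ i ∈ Mtil, μhat i) ≤ θ :=
  stmt_6_general n μ μhat 𝓜 hne θ hclose Mstar hMstar hopt a ha Mhat hMhat Mtil hempTil
end
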